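/- arXiv:1806.03506 — 3 statements merged into one kernel-verified Lean document; each statement's English description precedes it below -/
import Mathlib

section
/- Under the assumptions that f(x) = x·m(x) with m non-increasing, a = m(0) > 1, and f increasing, the sequence h_n(x) := f_n(x/a^n), where f_n is the n-th iterate of f, is non-increasing in n for each fixed x ≥ 0; hence the pointwise limit h(x) := lim_{n→∞} f_n(x/a^n) exists. -/
/-! Since `m` is non-increasing, `f y ≤ a y`, so `f (x / a^(n+1)) ≤ x / a^n`; applying the
monotone iterate `f^[n]` gives `h_{n+1} x ≤ h_n x`. As `f` preserves `[0, ∞)`, the sequence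
is bounded below by `0`, hence converges. -/

open Set Filter

theorem MonotoneOn.iterate_of_mapsTo {α : Type*} [Preorder α] {f : α → α} {s : Set α}
    (hf : MonotoneOn f s) (hs : MapsTo f s s) (n : ℕ) : MonotoneOn f^[n] s := by
  induction n with
  | zero => exact monotoneOn_id
  | succ k ih =>
    intro y hy z hz hyz
    simp only [Function.iterate_succ_apply]
    exact ih (hs hy) (hs hz) (hf hy hz hyz)

section RescaledIterates

variable {f : ℝ → ℝ} {a : ℝ}

theorem iterate_succ_div_pow_succ_le (hf_mono : MonotoneOn f (Ici 0))
    (hf_maps : MapsTo f (Ici 0) (Ici 0)) (hfa : ∀ y, 0 ≤ y → f y ≤ a * y) (ha : 0 < a)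
    {x : ℝ} (hx : 0 ≤ x) (n : ℕ) :
    f^[n + 1] (x / a ^ (n + 1)) ≤ f^[n] (x / a ^ n) := by
  have hx' : 0 ≤ x / a ^ (n + 1) := by positivity
  have hstep : f (x / a ^ (n + 1)) ≤ x / a ^ n :=
    calc f (x / a ^ (n + 1)) ≤ a * (x / a ^ (n + 1)) := hfa _ hx'
      _ = x / a ^ n := by field_simp; ring
  rw [Function.iterate_succ_apply]
  exact hf_mono.iterate_of_mapsTo hf_maps n (hf_maps hx') (by positivity : 0 ≤ x / a ^ n) hstep

theorem exists_tendsto_iterate_div_pow (hf_mono : MonotoneOn f (Ici 0))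
    (hf_maps : MapsTo f (Ici 0) (Ici 0)) (hfa : ∀ y, 0 ≤ y → f y ≤ a * y) (ha : 0 < a)
    {x : ℝ} (hx : 0 ≤ x) :
    ∃ L, Tendsto (fun n : ℕ => f^[n] (x / a ^ n)) atTop (nhds L) := by
  have hanti : Antitone (fun n : ℕ => f^[n] (x / a ^ n)) :=
    antitone_nat_of_succ_le (iterate_succ_div_pow_succ_le hf_mono hf_maps hfa ha hx)
  have hbdd : BddBelow (range fun n : ℕ => f^[n] (x / a ^ n)) := by
    refine ⟨0, ?_⟩
    rintro _ ⟨n, rfl⟩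
    exact hf_maps.iterate n (by positivity : 0 ≤ x / a ^ n)
  exact ⟨_, tendsto_atTop_ciInf hanti hbdd⟩

end RescaledIterates

/-- The sequence `h_n x = f^[n] (x / a^n)` is non-increasing in `n` for each `x ≥ 0`,
and hence the pointwise limit `h x = lim_n f^[n] (x / a^n)` exists. -/
theorem stmt_1 (m f : ℝ → ℝ) (a : ℝ)
    (hm_nonneg : ∀ x, 0 ≤ x → 0 ≤ m x)
    (hm_anti : ∀ x y, 0 ≤ x → x ≤ y → m y ≤ m x)
    (ha : a = m 0) (ha1 : 1 < a)
    (hf : ∀ x, 0 ≤ x → f x = x * m x)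
    (hf_mono : MonotoneOn f (Set.Ici 0)) :
    ∀ x, 0 ≤ x →
      (∀ n : ℕ, f^[n + 1] (x / a ^ (n + 1)) ≤ f^[n] (x / a ^ n)) ∧
      ∃ L : ℝ, Filter.Tendsto (fun n : ℕ => f^[n] (x / a ^ n)) Filter.atTop (nhds L) := by
  have ha0 : 0 < a := zero_lt_one.trans ha1
  have hf_maps : MapsTo f (Ici 0) (Ici 0) := fun y (hy : 0 ≤ y) => by
    rw [mem_Ici, hf y hy]
    exact mul_nonneg hy (hm_nonneg y hy)
  have hfa : ∀ y, 0 ≤ y → f y ≤ a * y := fun y hy => by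
    rw [hf y hy, mul_comm, ha]
    exact mul_le_mul_of_nonneg_right (hm_anti 0 y le_rfl hy) hy
  exact fun x hx => ⟨iterate_succ_div_pow_succ_le hf_mono hf_maps hfa ha0 hx,
    exists_tendsto_iterate_div_pow hf_mono hf_maps hfa ha0 hx⟩
end

section
/- The limit function h(x) = lim_{n→∞} f_n(x/a^n) satisfies Schröder's functional equation h(x) = f(h(x/a)) for all x ≥ 0. -/
/-! The sequence `f^[n+1] (x / a^(n+1))` is a tail of the sequence defining `h x`, while it is
also `f` applied to the sequence defining `h (x / a)`, so by continuity of `f` it tends to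
`f (h (x / a))`. -/

open Filter Set Topology

theorem Filter.Tendsto.iterate_succ_of_continuousOn {α : Type*} [TopologicalSpace α]
    {f : α → α} {s : Set α} (hs : IsClosed s) (hmaps : MapsTo f s s) (hf : ContinuousOn f s)
    {g : ℕ → α} (hg : ∀ n, g n ∈ s) {y : α}
    (hy : Tendsto (fun n => f^[n] (g n)) atTop (𝓝 y)) :
    Tendsto (fun n => f^[n + 1] (g n)) atTop (𝓝 (f y)) := by
  have hmem : ∀ n, f^[n] (g n) ∈ s := fun n => hmaps.iterate n (hg n)
  have hys : y ∈ s := hs.mem_of_tendsto hy (Eventually.of_forall hmem)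
  have hy_within : Tendsto (fun n => f^[n] (g n)) atTop (𝓝[s] y) :=
    tendsto_nhdsWithin_iff.2 ⟨hy, Eventually.of_forall hmem⟩
  simp only [Function.iterate_succ_apply']
  exact (hf y hys).tendsto.comp hy_within

theorem stmt_2_general (f h : ℝ → ℝ) (a : ℝ)
    (ha1 : 1 < a)
    (hf_cont : ContinuousOn f (Set.Ici 0))
    (hf_nonneg : ∀ x, 0 ≤ x → 0 ≤ f x)
    (hh : ∀ x, 0 ≤ x →
      Filter.Tendsto (fun n : ℕ => f^[n] (x / a ^ n)) Filter.atTop (nhds (h x))) :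
    ∀ x, 0 ≤ x → h x = f (h (x / a)) := by
  intro x hx
  have ha0 : 0 < a := zero_lt_one.trans ha1
  have hshift : Tendsto (fun n => f^[n + 1] (x / a ^ (n + 1))) atTop (𝓝 (h x)) :=
    (hh x hx).comp (tendsto_add_atTop_nat 1)
  have hstep : Tendsto (fun n => f^[n + 1] (x / a / a ^ n)) atTop (𝓝 (f (h (x / a)))) :=
    (hh (x / a) (by positivity)).iterate_succ_of_continuousOn isClosed_Ici
      (fun y hy => hf_nonneg y hy) hf_cont (fun n => mem_Ici.2 (by positivity))
  refine tendsto_nhds_unique hshift ?_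
  simpa only [div_div, pow_succ'] using hstep

/-- The limit function `h x = lim_n f^[n] (x / a^n)` satisfies Schröder's functional
equation `h x = f (h (x / a))` for all `x ≥ 0`. -/
theorem stmt_2 (m f h : ℝ → ℝ) (a : ℝ)
    (hm_anti : ∀ x y, 0 ≤ x → x ≤ y → m y ≤ m x)
    (ha : a = m 0) (ha1 : 1 < a)
    (hf : ∀ x, 0 ≤ x → f x = x * m x)
    (hf_mono : StrictMonoOn f (Set.Ici 0))
    (hf_cont : ContinuousOn f (Set.Ici 0))
    (hf_nonneg : ∀ x, 0 ≤ x → 0 ≤ f x)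
    (hh : ∀ x, 0 ≤ x →
      Filter.Tendsto (fun n : ℕ => f^[n] (x / a ^ n)) Filter.atTop (nhds (h x))) :
    ∀ x, 0 ≤ x → h x = f (h (x / a)) :=
  stmt_2_general f h a ha1 hf_cont hf_nonneg hh
end

section
/- Suppose f is differentiable with f'(y) ≥ a − C·y for 0 ≤ y ≤ ε, where a > 1, C > 0, and 0 ≤ f(y) ≤ a·y for all y ≥ 0. Then for x < min(ε, 1/C) and all n ≥ 0, the derivative of h_n(x) = f_n(x/a^n) satisfies h_n'(x) ≥ ∏_{j=0}^{n−1} (1 − a^{−j}·C·x) ≥ ∏_{j≥0}(1 − a^{−j}). -/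
/-!
By the chain rule, `h_n'(x) = ∏_{k<n} f'(z_k) / a` with `z_k = f_k(x / a^n)`. The bound
`f(y) ≤ a y` keeps the orbit small, `a^(n-1-k) z_k ≤ x`, so every `z_k` lies in `[0, x]`, where
`f'(z_k) ≥ a - C z_k > 0`; in particular `f` is differentiable along the orbit. Hence
`f'(z_k) / a ≥ 1 - a^{-(n-1-k)} C x`, and reversing the order of the factors gives the first
inequality. The infinite product vanishes because its factor at `j = 0` is `1 - 1`.
-/

open Finset

theorem hasDerivAt_iterate_of_differentiableAt {𝕜 : Type*} [NontriviallyNormedField 𝕜]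
    {f : 𝕜 → 𝕜} {y : 𝕜} :
    ∀ {n : ℕ}, (∀ k < n, DifferentiableAt 𝕜 f (f^[k] y)) →
      HasDerivAt f^[n] (∏ k ∈ range n, deriv f (f^[k] y)) y
  | 0, _ => by simpa using hasDerivAt_id y
  | n + 1, hf => by
    rw [Function.iterate_succ', prod_range_succ, mul_comm]
    exact (hf n n.lt_succ_self).hasDerivAt.comp y
      (hasDerivAt_iterate_of_differentiableAt fun k hk => hf k (hk.trans n.lt_succ_self))

theorem hasDerivAt_iterate_comp_div_pow {𝕜 : Type*} [NontriviallyNormedField 𝕜]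
    {f : 𝕜 → 𝕜} {a x : 𝕜} (n : ℕ)
    (hf : ∀ k < n, DifferentiableAt 𝕜 f (f^[k] (x / a ^ n))) :
    HasDerivAt (fun y => f^[n] (y / a ^ n))
      (∏ k ∈ range n, (deriv f (f^[k] (x / a ^ n)) / a)) x := by
  have h := (hasDerivAt_iterate_of_differentiableAt hf).comp x ((hasDerivAt_id x).div_const (a ^ n))
  rwa [prod_div_distrib, prod_const, card_range, div_eq_mul_one_div (∏ k ∈ range n, _)]

theorem iterate_nonneg_and_le_pow_mul {α : Type*} [Semiring α] [PartialOrder α] [IsOrderedRing α]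
    {f : α → α} {a : α} (ha : 0 ≤ a) (hf : ∀ y, 0 ≤ y → 0 ≤ f y ∧ f y ≤ a * y) (k : ℕ) {y : α}
    (hy : 0 ≤ y) : 0 ≤ f^[k] y ∧ f^[k] y ≤ a ^ k * y := by
  induction k with
  | zero => simpa using hy
  | succ k ih =>
    rw [Function.iterate_succ_apply']
    refine ⟨(hf _ ih.1).1, ?_⟩
    calc f (f^[k] y) ≤ a * f^[k] y := (hf _ ih.1).2
      _ ≤ a * (a ^ k * y) := mul_le_mul_of_nonneg_left ih.2 ha
      _ = a ^ (k + 1) * y := by rw [pow_succ', mul_assoc]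

theorem one_sub_inv_pow_mul_nonneg {a c : ℝ} (ha : 1 ≤ a) (hc : 0 ≤ c) (hc1 : c ≤ 1) (j : ℕ) :
    0 ≤ 1 - (a ^ j)⁻¹ * c :=
  sub_nonneg.mpr (mul_le_one₀ (inv_le_one_of_one_le₀ (one_le_pow₀ ha)) hc hc1)

section DerivativeBound

variable {f : ℝ → ℝ} {a C ε x : ℝ}

theorem iterate_div_pow_nonneg_and_pow_mul_le (ha : 1 < a)
    (hf_bounds : ∀ y, 0 ≤ y → 0 ≤ f y ∧ f y ≤ a * y) (hx : 0 ≤ x) {n k : ℕ} (hk : k < n) :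
    0 ≤ f^[k] (x / a ^ n) ∧ a ^ (n - 1 - k) * f^[k] (x / a ^ n) ≤ x := by
  have han : 0 < a ^ n := pow_pos (zero_lt_one.trans ha) n
  obtain ⟨hz0, hz⟩ := iterate_nonneg_and_le_pow_mul (zero_le_one.trans ha.le) hf_bounds k
    (div_nonneg hx han.le)
  refine ⟨hz0, ?_⟩
  calc a ^ (n - 1 - k) * f^[k] (x / a ^ n)
      ≤ a ^ (n - 1 - k) * (a ^ k * (x / a ^ n)) := by gcongr
    _ = a ^ (n - 1) * (x / a ^ n) := by rw [← mul_assoc, ← pow_add, Nat.sub_add_cancel (by omega)]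
    _ ≤ a ^ n * (x / a ^ n) := by gcongr; exacts [ha.le, by omega]
    _ = x := mul_div_cancel₀ x han.ne'

theorem one_sub_inv_pow_mul_le_deriv_div (ha : 1 < a)
    (hf_deriv : ∀ y, 0 ≤ y → y ≤ ε → a - C * y ≤ deriv f y) (hC : 0 ≤ C) {z : ℝ} (m : ℕ)
    (hz0 : 0 ≤ z) (hzε : z ≤ ε) (hz : a ^ m * z ≤ x) :
    1 - (a ^ m)⁻¹ * C * x ≤ deriv f z / a := by
  have ha0 : 0 < a := zero_lt_one.trans ha
  have hCz : C * z ≤ (a ^ m)⁻¹ * C * x := by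
    rw [mul_comm _ C, mul_assoc]
    gcongr
    rwa [le_inv_mul_iff₀ (pow_pos ha0 m)]
  calc 1 - (a ^ m)⁻¹ * C * x ≤ 1 - C * z := by linarith
    _ ≤ 1 - C * z / a := by gcongr; exact div_le_self (mul_nonneg hC hz0) ha.le
    _ = (a - C * z) / a := by field_simp
    _ ≤ deriv f z / a := by gcongr; exact hf_deriv z hz0 hzε

theorem prod_one_sub_le_deriv_iterate_comp_div_pow (ha : 1 < a)
    (hf_bounds : ∀ y, 0 ≤ y → 0 ≤ f y ∧ f y ≤ a * y)
    (hf_deriv : ∀ y, 0 ≤ y → y ≤ ε → a - C * y ≤ deriv f y)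
    (hC : 0 ≤ C) (hx : 0 ≤ x) (hxε : x ≤ ε) (hCx : C * x ≤ 1) (n : ℕ) :
    ∏ j ∈ range n, (1 - (a ^ j)⁻¹ * C * x) ≤ deriv (fun y => f^[n] (y / a ^ n)) x := by
  have horbit : ∀ k < n, 0 ≤ f^[k] (x / a ^ n) ∧ f^[k] (x / a ^ n) ≤ x := fun k hk => by
    obtain ⟨hz0, hz⟩ := iterate_div_pow_nonneg_and_pow_mul_le ha hf_bounds hx hk
    exact ⟨hz0, le_trans (le_mul_of_one_le_left hz0 (one_le_pow₀ ha.le)) hz⟩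
  have hdiff : ∀ k < n, DifferentiableAt ℝ f (f^[k] (x / a ^ n)) := fun k hk => by
    obtain ⟨hz0, hzx⟩ := horbit k hk
    -- `deriv f` is `0` wherever `f` is not differentiable, so a positive lower bound rules that out
    refine differentiableAt_of_deriv_ne_zero (ne_of_gt ?_)
    nlinarith [hf_deriv _ hz0 (hzx.trans hxε), mul_le_mul_of_nonneg_left hzx hC]
  rw [(hasDerivAt_iterate_comp_div_pow n hdiff).deriv, ← prod_range_reflect]
  refine prod_le_prod (fun j _ => ?_) (fun k hk => ?_)
  · rw [mul_assoc]
    exact one_sub_inv_pow_mul_nonneg ha.le (mul_nonneg hC hx) hCx _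
  · have hk := mem_range.mp hk
    exact one_sub_inv_pow_mul_le_deriv_div ha hf_deriv hC _ (horbit k hk).1
      ((horbit k hk).2.trans hxε) (iterate_div_pow_nonneg_and_pow_mul_le ha hf_bounds hx hk).2

end DerivativeBound

theorem stmt_4_general (f : ℝ → ℝ) (a C ε : ℝ) (ha1 : 1 < a)
    (hf_bounds : ∀ y, 0 ≤ y → 0 ≤ f y ∧ f y ≤ a * y)
    (hf_deriv : ∀ y, 0 ≤ y → y ≤ ε → a - C * y ≤ deriv f y) :
    ∀ x, 0 ≤ x → x < min ε (1 / C) → ∀ n : ℕ,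
      (∏ j ∈ Finset.range n, (1 - (a ^ j)⁻¹ * C * x)) ≤
        deriv (fun y => f^[n] (y / a ^ n)) x ∧
      (∏' j : ℕ, (1 - (a ^ j)⁻¹)) ≤ ∏ j ∈ Finset.range n, (1 - (a ^ j)⁻¹ * C * x) := by
  intro x hx hxlt n
  obtain ⟨hxε, hxC⟩ := lt_min_iff.mp hxlt
  have hC : 0 < C := one_div_pos.mp (hx.trans_lt hxC)
  have hCx : C * x ≤ 1 := ((lt_div_iff₀' hC).mp hxC).le
  refine ⟨prod_one_sub_le_deriv_iterate_comp_div_pow ha1 hf_bounds hf_deriv hC.le hx hxε.le hCx n,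
    ?_⟩
  rw [tprod_of_exists_eq_zero ⟨0, by simp⟩]
  exact prod_nonneg fun j _ => by
    rw [mul_assoc]; exact one_sub_inv_pow_mul_nonneg ha1.le (mul_nonneg hC.le hx) hCx j

/-- Derivative lower bound for `h_n x = f^[n] (x / a^n)`:
`h_n' x ≥ ∏_{j<n} (1 - a^{-j} C x) ≥ ∏_{j≥0} (1 - a^{-j})`. -/
theorem stmt_4 (f : ℝ → ℝ) (a C ε : ℝ) (ha1 : 1 < a) (hC : 0 < C) (hε : 0 < ε)
    (hf_diff : Differentiable ℝ f)
    (hf_bounds : ∀ y, 0 ≤ y → 0 ≤ f y ∧ f y ≤ a * y)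
    (hf_deriv : ∀ y, 0 ≤ y → y ≤ ε → a - C * y ≤ deriv f y) :
    ∀ x, 0 ≤ x → x < min ε (1 / C) → ∀ n : ℕ,
      (∏ j ∈ Finset.range n, (1 - (a ^ j)⁻¹ * C * x)) ≤
        deriv (fun y => f^[n] (y / a ^ n)) x ∧
      (∏' j : ℕ, (1 - (a ^ j)⁻¹)) ≤ ∏ j ∈ Finset.range n, (1 - (a ^ j)⁻¹ * C * x) :=
  stmt_4_general f a C ε ha1 hf_bounds hf_deriv
end
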